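/- Let c : I → E be a regulated function into a Banach space and φ : [s₀,s₁] → ℝ a C¹ map with φ([s₀,s₁]) ⊆ I. If c is continuous (or more generally if φ is strictly monotone), then the change-of-variables formula holds: ∫_{s₀}^{s} φ'(r)·c(φ(r)) dr = ∫_{φ(s₀)}^{φ(s)} c(t) dt for all s ∈ [s₀,s₁]. -/

import Mathlib

open Filter Topology Set MeasureTheory intervalIntegral

variable {E : Type*} [NormedAddCommGroup E] [NormedSpace ℝ E]
variable {F : Type*} [NormedAddCommGroup F] [NormedSpace ℝ F]

/-- A function `c` is regulated on `[a,b]`: it has a right limit (within `[a,b]`)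
at every point of `[a,b)` and a left limit at every point of `(a,b]`. -/
def Regulated (a b : ℝ) (c : ℝ → E) : Prop :=
  (∀ t ∈ Set.Ico a b, ∃ L : E, Filter.Tendsto c (nhdsWithin t (Set.Ioc t b)) (nhds L)) ∧
  (∀ t ∈ Set.Ioc a b, ∃ L : E, Filter.Tendsto c (nhdsWithin t (Set.Ico a t)) (nhds L))

/-- A strong regulated (`0`-regulated) path: regulated, right-continuous on `[a,b)`,
and left-continuous at `b`. -/
def StrongRegulated (a b : ℝ) (c : ℝ → E) : Prop :=
  Regulated a b c ∧
  (∀ t ∈ Set.Ico a b, Filter.Tendsto c (nhdsWithin t (Set.Ioc t b)) (nhds (c t))) ∧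
  Filter.Tendsto c (nhdsWithin b (Set.Ico a b)) (nhds (c b))

/-- A `1`-regulated path `c` with (strong regulated) derivative `u`:
`c t = c t₀ + ∫_{t₀}^t u`. -/
def OneRegulated (t₀ t₁ : ℝ) (c u : ℝ → E) : Prop :=
  StrongRegulated t₀ t₁ u ∧ ∀ t ∈ Set.Icc t₀ t₁, c t = c t₀ + ∫ s in t₀..t, u s

/-- Sup norm of `f` over `[a,b]`. -/
noncomputable def supN (a b : ℝ) (f : ℝ → E) : ℝ := ⨆ t : Set.Icc a b, ‖f t.1‖

theorem integral_deriv_smul_comp_of_monotoneOn {a b : ℝ} {f f' : ℝ → ℝ} {g : ℝ → E}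
    (hab : a ≤ b) (hf : ContinuousOn f (Icc a b)) (hff' : ∀ x ∈ Ioo a b, HasDerivAt f (f' x) x)
    (hmono : MonotoneOn f (Icc a b)) :
    ∫ x in a..b, f' x • g (f x) = ∫ u in f a..f b, g u := by
  have hIoo : Ioo (min a b) (max a b) = Ioo a b := by rw [min_eq_left hab, max_eq_right hab]
  rw [← uIcc_of_le hab] at hf
  refine integral_deriv_smul_comp_of_deriv_nonneg hf (hIoo ▸ hff') (hIoo ▸ fun x hx => ?_)
  have hacc : AccPt x (𝓟 (Icc a b)) :=
    uniqueDiffWithinAt_iff_accPt.mp (uniqueDiffOn_Icc (hx.1.trans hx.2) x (Ioo_subset_Icc_self hx))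
  exact (hff' x hx).hasDerivWithinAt.nonneg_of_monotoneOn hacc hmono

theorem regulated_change_of_variables_general
    {E : Type*} [NormedAddCommGroup E] [NormedSpace ℝ E]
    (α β : ℝ) (c : ℝ → E)
    (s₀ s₁ : ℝ) (φ φ' : ℝ → ℝ)
    (hderiv : ∀ r ∈ Set.Icc s₀ s₁, HasDerivAt φ (φ' r) r)
    (hcont : ContinuousOn φ' (Set.Icc s₀ s₁))
    (hmaps : Set.MapsTo φ (Set.Icc s₀ s₁) (Set.Icc α β))
    (hcase : ContinuousOn c (Set.Icc α β) ∨ StrictMonoOn φ (Set.Icc s₀ s₁)) :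
    ∀ s ∈ Set.Icc s₀ s₁,
      (∫ r in s₀..s, φ' r • c (φ r)) = ∫ t in φ s₀..φ s, c t := by
  rintro s ⟨hs₀, hs₁⟩
  have hsub : uIcc s₀ s ⊆ Icc s₀ s₁ := uIcc_of_le hs₀ ▸ Icc_subset_Icc_right hs₁
  have hφ : ∀ r ∈ uIcc s₀ s, HasDerivAt φ (φ' r) r := fun r hr => hderiv r (hsub hr)
  rcases hcase with hc | hmono
  · exact integral_deriv_smul_comp' hφ (hcont.mono hsub)
      (hc.mono ((image_mono hsub).trans hmaps.image_subset))
  · rw [uIcc_of_le hs₀] at hsub hφ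
    exact integral_deriv_smul_comp_of_monotoneOn hs₀
      (fun r hr => (hφ r hr).continuousAt.continuousWithinAt)
      (fun r hr => hφ r (Ioo_subset_Icc_self hr)) (hmono.monotoneOn.mono hsub)

/-- Change of variables for integrals of regulated functions: if `c` is regulated on
`[α,β]`, `φ : [s₀,s₁] → [α,β]` is `C¹`, and either `c` is continuous or `φ` is strictly
monotone, then `∫_{s₀}^{s} φ'(r) • c(φ(r)) dr = ∫_{φ(s₀)}^{φ(s)} c(t) dt`. -/
theorem regulated_change_of_variables
    {E : Type*} [NormedAddCommGroup E] [NormedSpace ℝ E] [CompleteSpace E]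
    (α β : ℝ) (hαβ : α ≤ β) (c : ℝ → E) (hc : Regulated α β c)
    (s₀ s₁ : ℝ) (hs : s₀ ≤ s₁) (φ φ' : ℝ → ℝ)
    (hderiv : ∀ r ∈ Set.Icc s₀ s₁, HasDerivAt φ (φ' r) r)
    (hcont : ContinuousOn φ' (Set.Icc s₀ s₁))
    (hmaps : Set.MapsTo φ (Set.Icc s₀ s₁) (Set.Icc α β))
    (hcase : ContinuousOn c (Set.Icc α β) ∨ StrictMonoOn φ (Set.Icc s₀ s₁)) :
    ∀ s ∈ Set.Icc s₀ s₁,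
      (∫ r in s₀..s, φ' r • c (φ r)) = ∫ t in φ s₀..φ s, c t :=
  regulated_change_of_variables_general α β c s₀ s₁ φ φ' hderiv hcont hmaps hcase
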